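/- Let F = (A, C) be a finite AAF. An AAF F' = (A, C') is a filtering preference sub-graph of F (i.e., C' = F_1 for some preference function f over F) if and only if there exists a CC-wise total order ≼ on F such that F' = F^4_≼, the Reduction 4 of F under ≼. -/
import Mathlib


/-- The three labels of a labelling: `inn` (in), `out`, `undec`. -/
inductive Label where
  | inn : Label
  | out : Label
  | undec : Label
deriving DecidableEq

/-- Undirected connectivity: reachability in the symmetric closure of `C`.
`Conn C a b` holds iff `a` and `b` are joined by an undirected path, i.e.
they lie in the same connected component of `(A, C)`. -/
def Conn {A : Type*} (C : A → A → Prop) : A → A → Prop :=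
  Relation.ReflTransGen (fun x y => C x y ∨ C y x)

/-- A CC-wise total order on the AAF `(A, C)`: a reflexive transitive relation
whose restriction to each connected component is total. -/
structure CCOrder {A : Type*} (C : A → A → Prop) where
  le : A → A → Prop
  refl : ∀ a, le a a
  trans : ∀ a b c, le a b → le b c → le a c
  total : ∀ a b, Conn C a b → le a b ∨ le b a

/-- Strict part: `a ≺ b` iff `a ≼ b` and not `b ≼ a`. -/
def CCOrder.lt {A : Type*} {C : A → A → Prop} (r : CCOrder C) (a b : A) : Prop :=
  r.le a b ∧ ¬ r.le b a

/-- Reduction 1: `C₁ = {(a,b) | ((a,b) ∈ C ∧ b ≼ a) ∨ ((b,a) ∈ C ∧ b ≺ a)}`. -/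
def red1 {A : Type*} (C : A → A → Prop) (r : CCOrder C) (a b : A) : Prop :=
  (C a b ∧ r.le b a) ∨ (C b a ∧ r.lt b a)

/-- Reduction 2: `C₂ = {(a,b) ∈ C | b ≼ a ∨ (b,a) ∉ C}`. -/
def red2 {A : Type*} (C : A → A → Prop) (r : CCOrder C) (a b : A) : Prop :=
  C a b ∧ (r.le b a ∨ ¬ C b a)

/-- Reduction 3: `C₁ ∪ C₂`. -/
def red3 {A : Type*} (C : A → A → Prop) (r : CCOrder C) (a b : A) : Prop :=
  red1 C r a b ∨ red2 C r a b

/-- Reduction 4: `C₄ = {(a,b) ∈ C | b ≼ a}`. -/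
def red4 {A : Type*} (C : A → A → Prop) (r : CCOrder C) (a b : A) : Prop :=
  C a b ∧ r.le b a

/-- `l` is a complete labelling of the attack relation `C`:
`l a = in` iff all attackers of `a` are `out`, and
`l a = out` iff some attacker of `a` is `in` (and `undec` otherwise,
which is automatic for a three-valued labelling). -/
def CompleteLabelling {A : Type*} (C : A → A → Prop) (l : A → Label) : Prop :=
  ∀ a, (l a = Label.inn ↔ ∀ b, C b a → l b = Label.out) ∧
       (l a = Label.out ↔ ∃ b, C b a ∧ l b = Label.inn)

/-- `(a,b) ∈ F₁`: an attack of `C` assigned value 1 by `f`. -/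
def inF1 {A : Type*} (C : A → A → Prop) (f : A → A → Bool) (a b : A) : Prop :=
  C a b ∧ f a b = true

/-- `(a,b) ∈ F₀`: an attack of `C` assigned value 0 by `f`. -/
def inF0 {A : Type*} (C : A → A → Prop) (f : A → A → Bool) (a b : A) : Prop :=
  C a b ∧ f a b = false

/-- The relation `conv(F₀) ∪ F₁`. -/
def Drel {A : Type*} (C : A → A → Prop) (f : A → A → Bool) (a b : A) : Prop :=
  inF0 C f b a ∨ inF1 C f a b

/-- The relation `F₁ \ conv(F₀)`. -/
def Erel {A : Type*} (C : A → A → Prop) (f : A → A → Bool) (a b : A) : Prop :=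
  inF1 C f a b ∧ ¬ inF0 C f b a

/-- `f` is a preference function over `(A, C)`: every directed cycle of
`conv(F₀) ∪ F₁` is entirely contained in `F₁ \ conv(F₀)`.  Equivalently
(edge-wise): every edge of `conv(F₀) ∪ F₁` lying on a directed cycle
(i.e. admitting a return path) belongs to `F₁ \ conv(F₀)`. -/
def IsPrefFun {A : Type*} (C : A → A → Prop) (f : A → A → Bool) : Prop :=
  ∀ a b, Drel C f a b → Relation.ReflTransGen (Drel C f) b a → Erel C f a b

/-- A ranking function for `(F, l)` (assuming no argument is labelled `out`):
(1) every attack touching an `in`-labelled argument strictly decreases rank, and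
(2) every `undec` argument has an `undec` attacker of rank at most its own. -/
def IsRanking {A : Type*} (C : A → A → Prop) (l : A → Label) (ψ : A → ℤ) : Prop :=
  (∀ u v, C u v → (l u = Label.inn ∨ l v = Label.inn) → ψ u > ψ v) ∧
  (∀ u, l u = Label.undec → ∃ v, C v u ∧ l v = Label.undec ∧ ψ v ≤ ψ u)
/-- `F' = (A, C')` is a filtering preference sub-graph of `F`
iff `F' = F⁴_≼` for some CC-wise total order `≼` on `F`. -/
theorem stmt8 {A : Type*} [Fintype A] (C C' : A → A → Prop) :
    (∃ f : A → A → Bool, IsPrefFun C f ∧ ∀ a b, C' a b ↔ inF1 C f a b) ↔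
      (∃ r : CCOrder C, ∀ a b, C' a b ↔ red4 C r a b) := by
  classical
  constructor
  · rintro ⟨f, hpf, hC'⟩
    set D := Drel C f with hD
    set le0 : A → A → Prop := fun x y => Relation.ReflTransGen D y x with hle0
    have key : ∀ a b, C a b → f a b = false → le0 a b ∧ ¬ le0 b a := by
      intro a b hab hf
      have hD0 : D b a := Or.inl ⟨hab, hf⟩
      refine ⟨Relation.ReflTransGen.single hD0, ?_⟩
      intro h
      exact (hpf b a hD0 h).2 ⟨hab, hf⟩
    have key1 : ∀ a b, C a b → f a b = true → le0 b a := fun a b hab hf =>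
      Relation.ReflTransGen.single (Or.inr ⟨hab, hf⟩)
    letI pre : Preorder A :=
      { le := le0
        le_refl := fun a => Relation.ReflTransGen.refl
        le_trans := fun a b c h1 h2 => Relation.ReflTransGen.trans h2 h1 }
    obtain ⟨s, hs, hsub⟩ :=
      extend_partialOrder ((· ≤ ·) : Antisymmetrization A (· ≤ ·) → _ → Prop)
    haveI := hs
    set π : A → Antisymmetrization A (· ≤ ·) := toAntisymmetrization (· ≤ ·) with hπ
    have hmono : ∀ x y : A, le0 x y → s (π x) (π y) := by
      intro x y h
      exact hsub _ _ (toAntisymmetrization_le_toAntisymmetrization_iff.mpr h)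
    refine ⟨⟨fun a b => s (π a) (π b), fun a => refl_of s _,
      fun a b c h1 h2 => _root_.trans_of s h1 h2,
      fun a b _ => total_of s _ _⟩, ?_⟩
    intro a b
    rw [hC' a b]
    constructor
    · rintro ⟨hab, hf⟩
      exact ⟨hab, hmono _ _ (key1 a b hab hf)⟩
    · rintro ⟨hab, hle⟩
      refine ⟨hab, ?_⟩
      by_contra hne
      have hf : f a b = false := by
        cases h : f a b with
        | true => exact absurd h hne
        | false => rfl
      obtain ⟨h1, h2⟩ := key a b hab hf
      have hsab : s (π a) (π b) := hmono _ _ h1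
      have : π a = π b := antisymm_of s hsab hle
      exact h2 (Quotient.exact' this).2
  · rintro ⟨r, hr⟩
    refine ⟨fun a b => decide (r.le b a), ?_, ?_⟩
    · have step : ∀ a b, Drel C (fun a b => decide (r.le b a)) a b → r.le b a := by
        rintro a b (⟨hba, hf⟩ | ⟨hab, hf⟩)
        · simp only [decide_eq_false_iff_not] at hf
          have hconn : Conn C a b := Relation.ReflTransGen.single (Or.inr hba)
          rcases r.total a b hconn with h | h
          · exact absurd h hf
          · exact h
        · simpa using hf
      intro a b hab hret
      have hba : r.le b a := step a b hab
      have hrab : r.le a b := by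
        clear hab hba
        induction hret with
        | refl => exact r.refl _
        | tail _ hD ih => exact r.trans _ _ _ (step _ _ hD) ih
      rcases hab with ⟨hb, hf⟩ | ⟨hC, hf⟩
      · simp only [decide_eq_false_iff_not] at hf
        exact absurd hrab hf
      · refine ⟨⟨hC, hf⟩, ?_⟩
        rintro ⟨hb, hf'⟩
        simp only [decide_eq_false_iff_not] at hf'
        exact hf' hrab
    · intro a b
      rw [hr a b]
      simp [red4, inF1]
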